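/- Let 𝔅 be an algebra of subsets of ω×2 containing all finite sets which is trivial on a cylinder C, and let (μ_n)_{n∈ω} be an admissible sequence (each μ_n identified with a finitely additive measure on P(ω×2)). Then for any sets J ⊆ I ⊆ ω, the pair (μ[J], μ[I∖J]) is 𝔅[C]-separated if and only if it is 𝔅-separated. -/

import Mathlib

/-- `𝔄` is an algebra of subsets of `S`: it contains `S`, and is closed under
complements, finite unions and finite intersections. -/
def IsSetAlgebraOn {S : Type*} (𝔄 : Set (Set S)) : Prop :=
  Set.univ ∈ 𝔄 ∧ (∀ A ∈ 𝔄, Aᶜ ∈ 𝔄) ∧ (∀ A ∈ 𝔄, ∀ B ∈ 𝔄, A ∪ B ∈ 𝔄) ∧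
    (∀ A ∈ 𝔄, ∀ B ∈ 𝔄, A ∩ B ∈ 𝔄)

/-- `m` is finitely additive on the algebra `𝔄` of subsets of `S`. -/
def FinAddOn {S : Type*} (𝔄 : Set (Set S)) (m : Set S → ℝ) : Prop :=
  ∀ A ∈ 𝔄, ∀ B ∈ 𝔄, Disjoint A B → m (A ∪ B) = m A + m B

/-- `m` has variation norm `‖m‖ = |m|(S) ≤ 1` on the algebra `𝔄`. -/
def VarLeOne {S : Type*} (𝔄 : Set (Set S)) (m : Set S → ℝ) : Prop :=
  ∀ B ∈ 𝔄, |m B| + |m Bᶜ| ≤ 1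

/-- `M₁(P(S))`: the finitely additive measures of norm at most `1` on the full power
set algebra of `S`. -/
def M1full (S : Type*) : Set (Set S → ℝ) :=
  {m | FinAddOn (Set.univ : Set (Set S)) m ∧ VarLeOne (Set.univ : Set (Set S)) m}

/-- The pair `(M, M')` is `𝔅`-separated: there are `ε > 0` and finitely many sets
`B₁, …, B_n ∈ 𝔅` such that for every `(μ, μ') ∈ M × M'` there is `i ≤ n` with
`|μ(B_i) − μ'(B_i)| ≥ ε`. -/
def SeparatedBy {S : Type*} (𝔅 : Set (Set S)) (M M' : Set (Set S → ℝ)) : Prop :=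
  ∃ ε > (0 : ℝ), ∃ n : ℕ, 0 < n ∧ ∃ B : Fin n → Set S, (∀ i, B i ∈ 𝔅) ∧
    ∀ m ∈ M, ∀ m' ∈ M', ∃ i, ε ≤ |m (B i) - m' (B i)|

/-- Membership in the algebra of sets generated by a family `G` of subsets of `S`. -/
inductive genAlgMem {S : Type*} (G : Set (Set S)) : Set S → Prop
  | base {A : Set S} : A ∈ G → genAlgMem G A
  | empty : genAlgMem G ∅
  | compl {A : Set S} : genAlgMem G A → genAlgMem G Aᶜ
  | union {A B : Set S} : genAlgMem G A → genAlgMem G B → genAlgMem G (A ∪ B)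

/-- The algebra of subsets of `S` generated by a family `G`. -/
def genAlg {S : Type*} (G : Set (Set S)) : Set (Set S) := {A | genAlgMem G A}

/-- The underlying countable set `ω × 2`. -/
abbrev S2 : Type := ℕ × Fin 2

/-- The cylinder `C₀ × 2 ⊆ ω × 2`. -/
def cyl (C₀ : Set ℕ) : Set S2 := {s : S2 | s.1 ∈ C₀}

/-- The cylinder `c_k = {(k,0), (k,1)}`. -/
def cylAt (k : ℕ) : Set S2 := {s : S2 | s.1 = k}

/-- The finitely additive measure on `P(ω × 2)` induced by an `ℓ₁` function `x`:
`B ↦ Σ_{s ∈ B} x(s)`. -/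
noncomputable def msr (x : S2 → ℝ) (B : Set S2) : ℝ := ∑' s : ↥B, x (s : S2)

/-- A sequence `(μ_n)` in the unit ball of `ℓ₁(ω × 2)` is admissible if
`μ_n(c_k) = 0` for all `n, k` and `inf_n |μ_n(n,0)| > 0`. -/
def Admissible (μ : ℕ → S2 → ℝ) : Prop :=
  (∀ n, Summable fun s => |μ n s|) ∧ (∀ n, (∑' s, |μ n s|) ≤ 1) ∧
    (∀ n k, μ n (k, 0) + μ n (k, 1) = 0) ∧ ∃ c > (0 : ℝ), ∀ n, c ≤ |μ n (n, 0)|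

/-- `μ[J] = {μ_n : n ∈ J}`, as a set of finitely additive measures on `P(ω × 2)`. -/
noncomputable def MsrSet (μ : ℕ → S2 → ℝ) (J : Set ℕ) : Set (Set S2 → ℝ) :=
  {m | ∃ n ∈ J, m = msr (μ n)}

/-- The algebra `𝔅` is trivial on the cylinder `C`: for every `B ∈ 𝔅` either `B ∩ C`
or `C ∖ B` is finite. -/
def TrivialOn (𝔅 : Set (Set S2)) (C : Set S2) : Prop :=
  ∀ B ∈ 𝔅, (B ∩ C).Finite ∨ (C \ B).Finite

/-!
Every set of `𝔅[C]` has the form `C.ite B₁ B₂ = (B₁ ∩ C) ∪ (B₂ \ C)` with `B₁, B₂ ∈ 𝔅`. Each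
`μ_n` vanishes on every cylinder, so `μ_n(B ∩ C) = -μ_n(C \ B)`; as `𝔅` is trivial on `C`, one of
`B ∩ C`, `C \ B` is finite and hence lies in `𝔅`. Thus `μ_n(A)` for `A ∈ 𝔅[C]` is a combination,
with coefficients in `{-1, 1}` independent of `n`, of the values of `μ_n` on three sets of `𝔅`,
and a separating family for `𝔅[C]` with constant `ε` yields one for `𝔅` with constant `ε / 3`.
-/

open Finset

theorem IsSetAlgebraOn.empty_mem {S : Type*} {𝔅 : Set (Set S)} (h𝔅 : IsSetAlgebraOn 𝔅) :
    ∅ ∈ 𝔅 := by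
  simpa using h𝔅.2.1 _ h𝔅.1

theorem subset_genAlg {S : Type*} (G : Set (Set S)) : G ⊆ genAlg G :=
  fun _ => genAlgMem.base

theorem exists_eq_ite_of_mem_genAlg {S : Type*} {𝔅 : Set (Set S)} (h𝔅 : IsSetAlgebraOn 𝔅)
    {C A : Set S} (hA : A ∈ genAlg (𝔅 ∪ {C})) : ∃ B₁ ∈ 𝔅, ∃ B₂ ∈ 𝔅, A = C.ite B₁ B₂ := by
  induction hA with
  | base hA =>
    rcases hA with hB | rfl
    · exact ⟨_, hB, _, hB, (Set.ite_same _ _).symm⟩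
    · exact ⟨_, h𝔅.1, ∅, h𝔅.empty_mem, by simp⟩
  | empty => exact ⟨∅, h𝔅.empty_mem, ∅, h𝔅.empty_mem, by simp⟩
  | compl _ ih =>
    obtain ⟨B₁, hB₁, B₂, hB₂, rfl⟩ := ih
    refine ⟨B₁ᶜ, h𝔅.2.1 _ hB₁, B₂ᶜ, h𝔅.2.1 _ hB₂, ?_⟩
    ext s
    by_cases hs : s ∈ C <;> simp [Set.ite, hs]
  | union _ _ ih₁ ih₂ =>
    obtain ⟨B₁, hB₁, B₂, hB₂, rfl⟩ := ih₁
    obtain ⟨B₁', hB₁', B₂', hB₂', rfl⟩ := ih₂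
    refine ⟨B₁ ∪ B₁', h𝔅.2.2.1 _ hB₁ _ hB₁', B₂ ∪ B₂', h𝔅.2.2.1 _ hB₂ _ hB₂', ?_⟩
    ext s
    by_cases hs : s ∈ C <;> simp [Set.ite, hs]

theorem abs_sum_mul_sub_sum_mul_le {ι : Type*} [Fintype ι] {c x y : ι → ℝ}
    (hc : ∀ j, |c j| ≤ 1) : |∑ j, c j * x j - ∑ j, c j * y j| ≤ ∑ j, |x j - y j| := by
  rw [← sum_sub_distrib]
  refine (abs_sum_le_sum_abs _ _).trans (sum_le_sum fun j _ => ?_)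
  rw [← mul_sub, abs_mul]
  exact mul_le_of_le_one_left (abs_nonneg _) (hc j)

theorem exists_div_le_of_le_sum {k : ℕ} (hk : 0 < k) {ε : ℝ} {f : Fin k → ℝ}
    (h : ε ≤ ∑ j, f j) : ∃ j, ε / k ≤ f j := by
  have hsum : ∑ _j : Fin k, ε / k = ε := by
    rw [sum_const, card_univ, Fintype.card_fin, nsmul_eq_mul]
    field_simp
  obtain ⟨j, -, hj⟩ := exists_le_of_sum_le (univ_nonempty_iff.2 ⟨⟨0, hk⟩⟩) (hsum.trans_le h)
  exact ⟨j, hj⟩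

theorem SeparatedBy.mono {S : Type*} {𝔄 𝔅 : Set (Set S)} {M M' : Set (Set S → ℝ)}
    (h𝔄𝔅 : 𝔄 ⊆ 𝔅) (h : SeparatedBy 𝔄 M M') : SeparatedBy 𝔅 M M' :=
  let ⟨ε, hε, n, hn, B, hB, hsep⟩ := h
  ⟨ε, hε, n, hn, B, fun i => h𝔄𝔅 (hB i), hsep⟩

theorem SeparatedBy.of_forall_eq_sum {S : Type*} {𝔄 𝔅 : Set (Set S)} {M M' : Set (Set S → ℝ)}
    {k : ℕ} (hk : 0 < k)
    (hrepr : ∀ A ∈ 𝔄, ∃ D : Fin k → Set S, (∀ j, D j ∈ 𝔅) ∧ ∃ c : Fin k → ℝ,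
      (∀ j, |c j| ≤ 1) ∧ ∀ m ∈ M ∪ M', m A = ∑ j, c j * m (D j))
    (h : SeparatedBy 𝔄 M M') : SeparatedBy 𝔅 M M' := by
  obtain ⟨ε, hε, n, hn, B, hB, hsep⟩ := h
  choose D hD c hc hDc using fun i => hrepr (B i) (hB i)
  refine ⟨ε / k, by positivity, n * k, Nat.mul_pos hn hk,
    fun p => D (finProdFinEquiv.symm p).1 (finProdFinEquiv.symm p).2, fun p => hD _ _, ?_⟩
  intro m hm m' hm'
  obtain ⟨i, hi⟩ := hsep m hm m' hm'
  rw [hDc i m (.inl hm), hDc i m' (.inr hm')] at hi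
  obtain ⟨j, hj⟩ := exists_div_le_of_le_sum hk (hi.trans (abs_sum_mul_sub_sum_mul_le (hc i)))
  exact ⟨finProdFinEquiv (i, j), by simpa using hj⟩

section Msr

variable {x : S2 → ℝ}

theorem msr_union (hx : Summable x) {A B : Set S2} (h : Disjoint A B) :
    msr x (A ∪ B) = msr x A + msr x B :=
  Summable.tsum_union_disjoint h (hx.subtype _) (hx.subtype _)

theorem msr_inter_add_msr_sdiff (hx : Summable x) (B C : Set S2) :
    msr x (B ∩ C) + msr x (B \ C) = msr x B := by
  rw [← msr_union hx (Set.disjoint_sdiff_right.mono_left Set.inter_subset_right),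
    Set.inter_union_sdiff]

theorem msr_ite (hx : Summable x) (C B₁ B₂ : Set S2) :
    msr x (C.ite B₁ B₂) = msr x (B₁ ∩ C) + msr x B₂ - msr x (B₂ ∩ C) := by
  rw [Set.ite, msr_union hx (Set.disjoint_sdiff_right.mono_left Set.inter_subset_right),
    ← msr_inter_add_msr_sdiff hx B₂ C]
  ring

theorem msr_cyl (hx : Summable x) (hpair : ∀ k, x (k, 0) + x (k, 1) = 0) (C₀ : Set ℕ) :
    msr x (cyl C₀) = 0 := by
  have hfiber (k : ℕ) : ∑' i : Fin 2, (cyl C₀).indicator x (k, i) = 0 := by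
    rw [tsum_fintype, Fin.sum_univ_two]
    by_cases hk : k ∈ C₀
    · rw [Set.indicator_of_mem (show ((k, 0) : S2) ∈ cyl C₀ from hk),
        Set.indicator_of_mem (show ((k, 1) : S2) ∈ cyl C₀ from hk), hpair k]
    · rw [Set.indicator_of_notMem (show ((k, 0) : S2) ∉ cyl C₀ from hk),
        Set.indicator_of_notMem (show ((k, 1) : S2) ∉ cyl C₀ from hk), add_zero]
  rw [msr, _root_.tsum_subtype, (hx.indicator _).tsum_prod' fun _ => .of_finite]
  simp only [hfiber, tsum_zero]

theorem msr_inter_cyl (hx : Summable x) (hpair : ∀ k, x (k, 0) + x (k, 1) = 0)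
    (B : Set S2) (C₀ : Set ℕ) : msr x (B ∩ cyl C₀) = -msr x (cyl C₀ \ B) := by
  have := msr_inter_add_msr_sdiff hx (cyl C₀) B
  rw [msr_cyl hx hpair, Set.inter_comm] at this
  linarith

end Msr

section Cylinder

variable {ι : Type*} {μ : ι → S2 → ℝ}

theorem exists_msr_inter_cyl_eq_mul (hsum : ∀ i, Summable (μ i))
    (hpair : ∀ i k, μ i (k, 0) + μ i (k, 1) = 0) {B : Set S2} {C₀ : Set ℕ}
    (hB : (B ∩ cyl C₀).Finite ∨ (cyl C₀ \ B).Finite) :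
    ∃ D : Set S2, D.Finite ∧ ∃ σ : ℝ, |σ| ≤ 1 ∧ ∀ i, msr (μ i) (B ∩ cyl C₀) = σ * msr (μ i) D := by
  rcases hB with hB | hB
  · exact ⟨_, hB, 1, by norm_num, fun i => (one_mul _).symm⟩
  · exact ⟨_, hB, -1, by norm_num, fun i => by rw [msr_inter_cyl (hsum i) (hpair i), neg_one_mul]⟩

theorem exists_msr_eq_sum_of_mem_genAlg {𝔅 : Set (Set S2)} (h𝔅 : IsSetAlgebraOn 𝔅)
    (hfin : ∀ F : Set S2, F.Finite → F ∈ 𝔅) {C₀ : Set ℕ} (htriv : TrivialOn 𝔅 (cyl C₀))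
    (hsum : ∀ i, Summable (μ i)) (hpair : ∀ i k, μ i (k, 0) + μ i (k, 1) = 0)
    {A : Set S2} (hA : A ∈ genAlg (𝔅 ∪ {cyl C₀})) :
    ∃ D : Fin 3 → Set S2, (∀ j, D j ∈ 𝔅) ∧ ∃ c : Fin 3 → ℝ, (∀ j, |c j| ≤ 1) ∧
      ∀ i, msr (μ i) A = ∑ j, c j * msr (μ i) (D j) := by
  obtain ⟨B₁, hB₁, B₂, hB₂, rfl⟩ := exists_eq_ite_of_mem_genAlg h𝔅 hA
  obtain ⟨D₁, hD₁, σ₁, hσ₁, h₁⟩ := exists_msr_inter_cyl_eq_mul hsum hpair (htriv B₁ hB₁)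
  obtain ⟨D₂, hD₂, σ₂, hσ₂, h₂⟩ := exists_msr_inter_cyl_eq_mul hsum hpair (htriv B₂ hB₂)
  refine ⟨![D₁, B₂, D₂], ?_, ![σ₁, 1, -σ₂], ?_, fun i => ?_⟩
  · intro j
    fin_cases j
    exacts [hfin _ hD₁, hB₂, hfin _ hD₂]
  · intro j
    fin_cases j <;> simp [hσ₁, hσ₂]
  · rw [msr_ite (hsum i), h₁, h₂, Fin.sum_univ_three]
    simp only [Matrix.cons_val]
    ring

end Cylinder

theorem statement15_general (𝔅 : Set (Set S2)) (h𝔅 : IsSetAlgebraOn 𝔅)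
    (hfin : ∀ F : Set S2, F.Finite → F ∈ 𝔅)
    (C₀ : Set ℕ) (htriv : TrivialOn 𝔅 (cyl C₀))
    (μ : ℕ → S2 → ℝ) (hμ : Admissible μ)
    (J I : Set ℕ) :
    SeparatedBy (genAlg (𝔅 ∪ {cyl C₀})) (MsrSet μ J) (MsrSet μ (I \ J)) ↔
      SeparatedBy 𝔅 (MsrSet μ J) (MsrSet μ (I \ J)) := by
  have hsum (n : ℕ) : Summable (μ n) := (hμ.1 n).of_abs
  refine ⟨SeparatedBy.of_forall_eq_sum three_pos fun A hA => ?_,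
    SeparatedBy.mono fun B hB => subset_genAlg _ (.inl hB)⟩
  obtain ⟨D, hD, c, hc, hrepr⟩ :=
    exists_msr_eq_sum_of_mem_genAlg h𝔅 hfin htriv hsum hμ.2.2.1 hA
  refine ⟨D, hD, c, hc, ?_⟩
  rintro m (⟨n, -, rfl⟩ | ⟨n, -, rfl⟩) <;> exact hrepr n

/-- If `𝔅` is an algebra of subsets of `ω × 2` containing all finite sets which is
trivial on a cylinder `C`, and `(μ_n)` is an admissible sequence, then for any
`J ⊆ I ⊆ ω` the pair `(μ[J], μ[I∖J])` is `𝔅[C]`-separated if and only if it is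
`𝔅`-separated. -/
theorem statement15 (𝔅 : Set (Set S2)) (h𝔅 : IsSetAlgebraOn 𝔅)
    (hfin : ∀ F : Set S2, F.Finite → F ∈ 𝔅)
    (C₀ : Set ℕ) (htriv : TrivialOn 𝔅 (cyl C₀))
    (μ : ℕ → S2 → ℝ) (hμ : Admissible μ)
    (J I : Set ℕ) (hJI : J ⊆ I) :
    SeparatedBy (genAlg (𝔅 ∪ {cyl C₀})) (MsrSet μ J) (MsrSet μ (I \ J)) ↔
      SeparatedBy 𝔅 (MsrSet μ J) (MsrSet μ (I \ J)) :=
  statement15_general 𝔅 h𝔅 hfin C₀ htriv μ hμ J I
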